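/- arXiv:1511.06991 — 7 statements merged into one kernel-verified Lean document; each statement's English description precedes it below -/
import Mathlib

section
/- For the binomial distribution with parameters n and p = 1/4 (n divisible by 4), the mean absolute deviation satisfies: the sum over k from 0 to n of C(n,k)(1/4)^k(3/4)^{n-k}|k - n/4| equals (3n/8) * C(n, n/4) * (1/4)^{n/4} * (3/4)^{3n/4}. -/
/-!
With `b k = C(n,k) p^k (1-p)^(n-k)`, the identity `(k - n p) b k = A k - A (k+1)` for
`A k = k (1-p) b k` makes every partial sum of `(k - n p) b k` telescope; the full sum vanishes.
So when `n p = m` is an integer, the mean absolute deviation is `-2 ∑_{k<m} (k - m) b k = 2 A m`.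
-/

open Finset

noncomputable def binomialTerm (n : ℕ) (p : ℝ) (k : ℕ) : ℝ :=
  n.choose k * p ^ k * (1 - p) ^ (n - k)

lemma sub_mul_binomialTerm (n k : ℕ) (p : ℝ) :
    ((k : ℝ) - n * p) * binomialTerm n p k =
      k * (1 - p) * binomialTerm n p k - (k + 1 : ℕ) * (1 - p) * binomialTerm n p (k + 1) := by
  unfold binomialTerm
  rcases lt_or_ge k n with hk | hk
  · have hchoose : (n.choose (k + 1) : ℝ) * (k + 1) = n.choose k * (n - k) := by
      rw [← Nat.cast_sub hk.le]
      exact_mod_cast Nat.choose_succ_right_eq n k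
    rw [show n - k = n - (k + 1) + 1 by omega, pow_succ]
    push_cast
    linear_combination (1 - p) * p ^ (k + 1) * (1 - p) ^ (n - (k + 1)) * hchoose
  · rcases hk.eq_or_lt with rfl | hk
    · simp only [Nat.choose_self, Nat.choose_succ_self, Nat.sub_self, pow_zero, Nat.cast_zero,
        Nat.cast_one, mul_zero, zero_mul, sub_zero]
      ring
    · simp [Nat.choose_eq_zero_of_lt hk, Nat.choose_eq_zero_of_lt (hk.trans (Nat.lt_succ_self k))]

lemma sum_range_sub_mul_binomialTerm (n j : ℕ) (p : ℝ) :
    ∑ k ∈ range j, ((k : ℝ) - n * p) * binomialTerm n p k = -(j * (1 - p) * binomialTerm n p j) := by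
  simp_rw [sub_mul_binomialTerm]
  rw [sum_range_sub' (fun k : ℕ => (k : ℝ) * (1 - p) * binomialTerm n p k)]
  simp

theorem sum_binomialTerm_mul_abs_sub {n m : ℕ} {p : ℝ} (hm : n * p = m) (hmn : m ≤ n) :
    ∑ k ∈ range (n + 1), binomialTerm n p k * |(k : ℝ) - n * p| =
      2 * (n * p) * (1 - p) * binomialTerm n p m := by
  have hmean : ∑ k ∈ range (n + 1), ((k : ℝ) - n * p) * binomialTerm n p k = 0 := by
    rw [sum_range_sub_mul_binomialTerm]
    simp [binomialTerm]
  have hm1 : m ≤ n + 1 := by omega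
  rw [← sum_range_add_sum_Ico _ hm1] at hmean ⊢
  have hlow : ∑ k ∈ range m, binomialTerm n p k * |(k : ℝ) - n * p| =
      -∑ k ∈ range m, ((k : ℝ) - n * p) * binomialTerm n p k := by
    rw [← sum_neg_distrib]
    refine sum_congr rfl fun k hk => ?_
    have : (k : ℝ) < m := by exact_mod_cast mem_range.mp hk
    rw [abs_of_neg (by linarith)]
    ring
  have hhigh : ∑ k ∈ Ico m (n + 1), binomialTerm n p k * |(k : ℝ) - n * p| =
      ∑ k ∈ Ico m (n + 1), ((k : ℝ) - n * p) * binomialTerm n p k := by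
    refine sum_congr rfl fun k hk => ?_
    have : (m : ℝ) ≤ k := by exact_mod_cast (mem_Ico.mp hk).1
    rw [abs_of_nonneg (by linarith)]
    ring
  rw [hlow, hhigh]
  rw [sum_range_sub_mul_binomialTerm] at hmean ⊢
  linear_combination hmean - 2 * (1 - p) * binomialTerm n p m * hm

theorem binomial_mean_deviation_quarter_general (n : ℕ) (h4 : 4 ∣ n) :
    ∑ k ∈ Finset.range (n + 1),
      (n.choose k : ℝ) * (1/4)^k * (3/4)^(n - k) * |(k : ℝ) - (n : ℝ)/4|
    = (3 * (n : ℝ) / 8) * (n.choose (n/4) : ℝ) * (1/4)^(n/4) * (3/4)^(3*n/4) := by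
  obtain ⟨m, rfl⟩ := h4
  have hp : ((4 * m : ℕ) : ℝ) * (1 / 4) = m := by push_cast; ring
  have hmad := sum_binomialTerm_mul_abs_sub hp (by omega)
  rw [hp] at hmad
  rw [show ((4 * m : ℕ) : ℝ) / 4 = m by push_cast; ring, show 4 * m / 4 = m by omega,
    show 3 * (4 * m) / 4 = 4 * m - m by omega]
  simp only [binomialTerm] at hmad
  rw [show (1 : ℝ) - 1 / 4 = 3 / 4 by norm_num] at hmad
  rw [hmad]
  push_cast
  ring

/-- De Moivre mean absolute deviation formula for the binomial distribution
B(n, 1/4) with n divisible by 4. -/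
theorem binomial_mean_deviation_quarter (n : ℕ) (hn : 0 < n) (h4 : 4 ∣ n) :
    ∑ k ∈ Finset.range (n + 1),
      (n.choose k : ℝ) * (1/4)^k * (3/4)^(n - k) * |(k : ℝ) - (n : ℝ)/4|
    = (3 * (n : ℝ) / 8) * (n.choose (n/4) : ℝ) * (1/4)^(n/4) * (3/4)^(3*n/4) :=
  binomial_mean_deviation_quarter_general n h4
end

section
/- For a binomial distribution B(n,p) where np = m is an integer, the expected absolute deviation E|X - m| equals 2np(1-p) * C(n-1, m-1) * p^{m-1} * (1-p)^{n-m}. -/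
/-!
Write `b k = C(n,k) p^k (1-p)^(n-k)`. The identity `b k * (n p - k) = (1-p) ((k+1) b (k+1) - k b k)`
makes the partial sums of `∑ b k (n p - k)` telescope to `(1-p) N b N`. Since the mean is
`n p = m`, `E|X - m| = 2 E (X - m)⁻ = 2 ∑_{k<m} b k (m - k) = 2 (1-p) m b m`, and `m C(n,m) = n C(n-1,m-1)`
turns this into de Moivre's formula.
-/

open Finset

noncomputable def binomTerm (n : ℕ) (p : ℝ) (k : ℕ) : ℝ :=
  n.choose k * p ^ k * (1 - p) ^ (n - k)

namespace binomTerm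

variable {n : ℕ} {p : ℝ}

lemma eq_zero_of_lt {k : ℕ} (h : n < k) : binomTerm n p k = 0 := by
  simp [binomTerm, Nat.choose_eq_zero_of_lt h]

lemma mul_mean_sub (n k : ℕ) (p : ℝ) :
    binomTerm n p k * (n * p - k)
      = (1 - p) * ((k + 1) * binomTerm n p (k + 1) - k * binomTerm n p k) := by
  rcases lt_trichotomy k n with hk | rfl | hk
  · obtain ⟨j, rfl⟩ := Nat.exists_eq_add_of_lt hk
    have hchoose : ((k + j + 1).choose (k + 1) : ℝ) * (k + 1) = (k + j + 1).choose k * (j + 1) := by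
      exact_mod_cast (show k + j + 1 - k = j + 1 by omega) ▸ Nat.choose_succ_right_eq (k + j + 1) k
    simp only [binomTerm, show k + j + 1 - k = j + 1 by omega,
      show k + j + 1 - (k + 1) = j by omega]
    push_cast
    linear_combination (-(p ^ (k + 1) * (1 - p) ^ (j + 1))) * hchoose
  · simp [binomTerm]
    ring
  · simp [eq_zero_of_lt hk, eq_zero_of_lt (hk.trans (Nat.lt_succ_self k))]

lemma sum_range_mul_mean_sub (n N : ℕ) (p : ℝ) :
    ∑ k ∈ range N, binomTerm n p k * (n * p - k) = (1 - p) * N * binomTerm n p N := by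
  simp only [mul_mean_sub, ← mul_sum]
  have htelescope := sum_range_sub (fun k : ℕ ↦ (k : ℝ) * binomTerm n p k) N
  push_cast at htelescope
  rw [htelescope]
  simp [mul_assoc]

lemma sum_range_mul_of_lt (f : ℕ → ℝ) {N : ℕ} (h : n < N) :
    ∑ k ∈ range N, binomTerm n p k * f k = ∑ k ∈ range (n + 1), binomTerm n p k * f k := by
  refine (sum_subset (range_subset_range.2 h) fun k _ hk ↦ ?_).symm
  rw [eq_zero_of_lt (by simpa using hk), zero_mul]

lemma sum_mul_abs_sub_mean {m : ℕ} (hm : n * p = m) :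
    ∑ k ∈ range (n + 1), binomTerm n p k * |(k : ℝ) - m| = 2 * (1 - p) * m * binomTerm n p m := by
  -- Summing up to `m + (n + 1)` covers both the support `k ≤ n` of `b` and the range `k < m`.
  have hN : n < m + (n + 1) := by omega
  have hmean : ∑ k ∈ range (m + (n + 1)), binomTerm n p k * ((k : ℝ) - m) = 0 := by
    have := sum_range_mul_mean_sub n (m + (n + 1)) p
    rw [eq_zero_of_lt hN, mul_zero, hm] at this
    rw [← neg_eq_zero, ← sum_neg_distrib]
    simpa only [← mul_neg, neg_sub] using this
  have hdeficit : ∑ k ∈ range (m + (n + 1)), binomTerm n p k * ((k : ℝ) - m)⁻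
      = (1 - p) * m * binomTerm n p m := by
    have hbelow : ∀ k ∈ range m, ((k : ℝ) - m)⁻ = n * p - k := fun k hk ↦ by
      rw [negPart_of_nonpos (by simpa using (mem_range.1 hk).le), neg_sub, hm]
    have habove : ∀ j, (((m + j : ℕ) : ℝ) - m)⁻ = 0 := fun j ↦
      negPart_of_nonneg (by push_cast; linarith [j.cast_nonneg (α := ℝ)])
    rw [sum_range_add]
    simp only [habove, mul_zero, sum_const_zero, add_zero]
    rw [sum_congr rfl fun k hk ↦ by rw [hbelow k hk], sum_range_mul_mean_sub]
  calc ∑ k ∈ range (n + 1), binomTerm n p k * |(k : ℝ) - m|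
      = ∑ k ∈ range (m + (n + 1)), binomTerm n p k * |(k : ℝ) - m| :=
        (sum_range_mul_of_lt _ hN).symm
    _ = ∑ k ∈ range (m + (n + 1)), binomTerm n p k * ((k : ℝ) - m)
          + 2 * ∑ k ∈ range (m + (n + 1)), binomTerm n p k * ((k : ℝ) - m)⁻ := by
        rw [mul_sum, ← sum_add_distrib]
        refine sum_congr rfl fun k _ ↦ ?_
        rw [eq_add_of_sub_eq (abs_sub_eq_two_nsmul_negPart ((k : ℝ) - m)), nsmul_eq_mul]
        ring
    _ = 2 * (1 - p) * m * binomTerm n p m := by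
        rw [hmean, hdeficit]
        ring

lemma natCast_mul_self_eq {m : ℕ} (hm : 1 ≤ m) :
    m * binomTerm n p m
      = n * p * ((n - 1).choose (m - 1) : ℝ) * p ^ (m - 1) * (1 - p) ^ (n - m) := by
  obtain ⟨j, rfl⟩ := Nat.exists_eq_add_of_le' hm
  rcases n with _ | i
  · simp [binomTerm]
  · have hcast : ((i + 1 : ℕ) : ℝ) * i.choose j = (i + 1).choose (j + 1) * (j + 1 : ℕ) := by
      exact_mod_cast Nat.add_one_mul_choose_eq i j
    simp only [binomTerm, Nat.add_sub_cancel]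
    push_cast at hcast ⊢
    linear_combination (-(p ^ (j + 1) * (1 - p) ^ (i - j))) * hcast

end binomTerm

theorem binomial_mean_deviation_general (n m : ℕ) (p : ℝ)
    (hm : (n : ℝ) * p = (m : ℝ)) (hm1 : 1 ≤ m) :
    ∑ k ∈ Finset.range (n + 1),
      (n.choose k : ℝ) * p^k * (1-p)^(n-k) * |(k : ℝ) - (m : ℝ)|
    = 2 * (n : ℝ) * p * (1 - p) * ((n-1).choose (m-1) : ℝ) * p^(m-1) * (1-p)^(n-m) := by
  change ∑ k ∈ range (n + 1), binomTerm n p k * |(k : ℝ) - m| = _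
  rw [binomTerm.sum_mul_abs_sub_mean hm, mul_assoc, binomTerm.natCast_mul_self_eq hm1]
  ring

/-- De Moivre's mean absolute deviation formula: for X ~ B(n,p) with
np = m a positive integer, E|X - m| = 2np(1-p) C(n-1, m-1) p^(m-1) (1-p)^(n-m). -/
theorem binomial_mean_deviation (n m : ℕ) (p : ℝ) (hp0 : 0 < p) (hp1 : p < 1)
    (hm : (n : ℝ) * p = (m : ℝ)) (hm1 : 1 ≤ m) (hmn : m ≤ n) :
    ∑ k ∈ Finset.range (n + 1),
      (n.choose k : ℝ) * p^k * (1-p)^(n-k) * |(k : ℝ) - (m : ℝ)|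
    = 2 * (n : ℝ) * p * (1 - p) * ((n-1).choose (m-1) : ℝ) * p^(m-1) * (1-p)^(n-m) :=
  binomial_mean_deviation_general n m p hm hm1
end

section
/- The vector |psi_1> with components <k|psi_1> = sqrt(C(n,k)/(3n)) * (1/2)^k * (sqrt(3)/2)^{n-k} * (n - 4k), k = 0,...,n, is a unit eigenvector of H_0 = -(sqrt(3)/2) X - (1/2) Z with eigenvalue -(n/2 - 1). -/
open Matrix

/-- The transverse-field operator X restricted to the symmetric subspace:
⟨k-1|X|k⟩ = ⟨k|X|k-1⟩ = (1/2)√(k(n+1-k)), zero diagonal. -/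
noncomputable def Xop (n : ℕ) : Matrix (Fin (n + 1)) (Fin (n + 1)) ℝ :=
  fun i j =>
    if i.val + 1 = j.val then (1/2) * Real.sqrt ((j.val : ℝ) * ((n : ℝ) + 1 - (j.val : ℝ)))
    else if j.val + 1 = i.val then (1/2) * Real.sqrt ((i.val : ℝ) * ((n : ℝ) + 1 - (i.val : ℝ)))
    else 0

/-- The longitudinal operator Z, diagonal with entries n/2 - k. -/
noncomputable def Zop (n : ℕ) : Matrix (Fin (n + 1)) (Fin (n + 1)) ℝ :=
  Matrix.diagonal (fun k => (n : ℝ)/2 - (k.val : ℝ))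

/-- The spikeless Hamiltonian H₀ = -(√3/2) X - (1/2) Z at the critical point. -/
noncomputable def H0 (n : ℕ) : Matrix (Fin (n + 1)) (Fin (n + 1)) ℝ :=
  (-(Real.sqrt 3 / 2)) • Xop n + (-(1/2 : ℝ)) • Zop n

/-- The ground state of the spikeless Hamiltonian,
⟨k|ψ₀⟩ = √C(n,k) (1/2)^k (√3/2)^(n-k). -/
noncomputable def psi0 (n : ℕ) : Fin (n + 1) → ℝ :=
  fun k => Real.sqrt (n.choose k.val) * (1/2)^k.val * (Real.sqrt 3 / 2)^(n - k.val)


/-- The first excited state of the spikeless Hamiltonian,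
⟨k|ψ₁⟩ = √(C(n,k)/(3n)) (1/2)^k (√3/2)^(n-k) (n - 4k). -/
noncomputable def psi1 (n : ℕ) : Fin (n + 1) → ℝ :=
  fun k => Real.sqrt ((n.choose k.val : ℝ) / (3 * (n : ℝ))) * (1/2)^k.val *
    (Real.sqrt 3 / 2)^(n - k.val) * ((n : ℝ) - 4 * (k.val : ℝ))

open Finset


lemma sum_pq (n : ℕ) : ∑ k ∈ range (n+1), (n.choose k : ℝ) * (1/4)^k * (3/4)^(n-k) = 1 := by
  have h := add_pow (1/4 : ℝ) (3/4) n
  norm_num at h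
  calc ∑ k ∈ range (n+1), (n.choose k : ℝ) * (1/4)^k * (3/4)^(n-k)
      = ∑ x ∈ range (n + 1), (1/4:ℝ) ^ x * (3/4) ^ (n - x) * (n.choose x) :=
        Finset.sum_congr rfl (fun k _ => by ring)
    _ = 1 := h.symm

lemma sum_k_pq (n : ℕ) : ∑ k ∈ range (n+1),
    (k : ℝ) * (n.choose k : ℝ) * (1/4)^k * (3/4)^(n-k) = (n : ℝ)/4 := by
  induction n with
  | zero => simp
  | succ m ih =>
    rw [Finset.sum_range_succ']
    have key : ∀ i ∈ range (m+1), ((i+1 : ℕ) : ℝ) * ((m+1).choose (i+1) : ℝ) * (1/4)^(i+1) * (3/4)^(m+1-(i+1))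
        = ((m:ℝ)+1)/4 * ((m.choose i : ℝ) * (1/4)^i * (3/4)^(m-i)) := by
      intro i _
      have hc : ((m+1 : ℕ) : ℝ) * (m.choose i : ℝ) = ((m+1).choose (i+1) : ℝ) * ((i:ℝ)+1) := by
        exact_mod_cast congrArg (Nat.cast (R := ℝ)) (Nat.add_one_mul_choose_eq m i)
      rw [Nat.succ_sub_succ]
      push_cast at hc ⊢
      rw [pow_succ]
      linear_combination (-(1/4:ℝ)^i*(1/4)*(3/4)^(m-i)) * hc
    rw [Finset.sum_congr rfl key, ← Finset.mul_sum, sum_pq m]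
    push_cast
    simp

lemma sum_kk_pq (n : ℕ) : ∑ k ∈ range (n+1),
    (k : ℝ) * ((k : ℝ) - 1) * (n.choose k : ℝ) * (1/4)^k * (3/4)^(n-k)
      = (n : ℝ) * ((n : ℝ) - 1) / 16 := by
  induction n with
  | zero => norm_num
  | succ m ih =>
    rw [Finset.sum_range_succ']
    have key : ∀ i ∈ range (m+1), ((i+1 : ℕ) : ℝ) * (((i+1 : ℕ) : ℝ) - 1) * ((m+1).choose (i+1) : ℝ) * (1/4)^(i+1) * (3/4)^(m+1-(i+1))
        = ((m:ℝ)+1)/4 * ((i : ℝ) * (m.choose i : ℝ) * (1/4)^i * (3/4)^(m-i)) := by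
      intro i _
      have hc : ((m+1 : ℕ) : ℝ) * (m.choose i : ℝ) = ((m+1).choose (i+1) : ℝ) * ((i:ℝ)+1) := by
        exact_mod_cast congrArg (Nat.cast (R := ℝ)) (Nat.add_one_mul_choose_eq m i)
      rw [Nat.succ_sub_succ]
      push_cast at hc ⊢
      rw [pow_succ]
      linear_combination (-(i:ℝ)*(1/4:ℝ)^i*(1/4)*(3/4)^(m-i)) * hc
    rw [Finset.sum_congr rfl key, ← Finset.mul_sum, sum_k_pq m]
    push_cast
    simp
    ring

lemma sum_main (n : ℕ) : ∑ k ∈ range (n+1),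
    (n.choose k : ℝ) * (1/4)^k * (3/4)^(n-k) * ((n:ℝ) - 4*(k:ℝ))^2 = 3 * (n:ℝ) := by
  have expand : ∀ k ∈ range (n+1),
      (n.choose k : ℝ) * (1/4)^k * (3/4)^(n-k) * ((n:ℝ) - 4*(k:ℝ))^2
      = (n:ℝ)^2 * ((n.choose k : ℝ) * (1/4)^k * (3/4)^(n-k))
        + (16 - 8*(n:ℝ)) * ((k : ℝ) * (n.choose k : ℝ) * (1/4)^k * (3/4)^(n-k))
        + 16 * ((k : ℝ) * ((k : ℝ) - 1) * (n.choose k : ℝ) * (1/4)^k * (3/4)^(n-k)) := by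
    intro k _; ring
  rw [Finset.sum_congr rfl expand]
  rw [Finset.sum_add_distrib, Finset.sum_add_distrib, ← Finset.mul_sum, ← Finset.mul_sum,
    ← Finset.mul_sum, sum_pq n, sum_k_pq n, sum_kk_pq n]
  ring

noncomputable def wv (n : ℕ) : ℕ → ℝ :=
  fun k => Real.sqrt (n.choose k) * (1/2)^k * (Real.sqrt 3 / 2)^(n - k) * ((n:ℝ) - 4*(k:ℝ))

lemma wv_top (n : ℕ) : wv n (n+1) = 0 := by
  simp [wv, Nat.choose_succ_self]

lemma choose_cast_eq (n k : ℕ) (hk : k ≤ n) :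
    (n.choose (k+1) : ℝ) * ((k:ℝ)+1) = (n.choose k : ℝ) * ((n:ℝ) - k) := by
  have h := congrArg (Nat.cast (R := ℝ)) (Nat.choose_succ_right_eq n k)
  push_cast [Nat.cast_sub hk] at h
  linarith

lemma key1 (n k : ℕ) (hk : k ≤ n) :
    Real.sqrt (((k:ℝ)+1) * ((n:ℝ) - k)) * Real.sqrt (n.choose (k+1)) =
      ((n:ℝ) - k) * Real.sqrt (n.choose k) := by
  have hnk : (0:ℝ) ≤ (n:ℝ) - k := by
    have := (Nat.cast_le (α := ℝ)).2 hk; linarith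
  have h1 : (0:ℝ) ≤ ((k:ℝ)+1) * ((n:ℝ) - k) := by positivity
  rw [← Real.sqrt_mul h1, show ((n:ℝ) - k) * Real.sqrt (n.choose k)
    = Real.sqrt (((n:ℝ)-k)^2) * Real.sqrt (n.choose k) from by rw [Real.sqrt_sq hnk],
    ← Real.sqrt_mul (by positivity)]
  congr 1
  linear_combination ((n:ℝ) - k) * choose_cast_eq n k hk

lemma key2 (n m : ℕ) (hm : m ≤ n) :
    Real.sqrt (((m:ℝ)+1) * ((n:ℝ) - m)) * Real.sqrt (n.choose m) =
      ((m:ℝ)+1) * Real.sqrt (n.choose (m+1)) := by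
  have hnm : (0:ℝ) ≤ (n:ℝ) - m := by
    have := (Nat.cast_le (α := ℝ)).2 hm; linarith
  have h1 : (0:ℝ) ≤ ((m:ℝ)+1) * ((n:ℝ) - m) := by positivity
  rw [← Real.sqrt_mul h1, show ((m:ℝ)+1) * Real.sqrt (n.choose (m+1))
    = Real.sqrt (((m:ℝ)+1)^2) * Real.sqrt (n.choose (m+1)) from by
      rw [Real.sqrt_sq (by positivity)],
    ← Real.sqrt_mul (by positivity)]
  congr 1
  linear_combination (-((m:ℝ)+1)) * choose_cast_eq n m hm

lemma hs3 : Real.sqrt 3 * Real.sqrt 3 = 3 := Real.mul_self_sqrt (by norm_num)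

-- upper-neighbor term
lemma hA (n k : ℕ) (hk : k ≤ n) :
    (1/2) * Real.sqrt ((((k+1:ℕ)):ℝ) * ((n:ℝ) + 1 - (((k+1:ℕ)):ℝ))) * wv n (k+1)
      = ((n:ℝ) - k) * ((n:ℝ) - 4*k - 4) *
        (Real.sqrt (n.choose k) * (1/2)^k * (Real.sqrt 3 / 2)^(n-k)) * (Real.sqrt 3 / 6) := by
  rcases eq_or_lt_of_le hk with rfl | hkn
  · rw [wv_top]
    simp
  · have he : n - k = (n - (k+1)) + 1 := by omega
    unfold wv
    rw [show ((((k+1:ℕ)):ℝ) * ((n:ℝ) + 1 - (((k+1:ℕ)):ℝ))) = (((k:ℝ)+1) * ((n:ℝ) - k)) from by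
      push_cast; ring]
    rw [he, pow_succ]
    push_cast
    linear_combination
      ((1/2:ℝ) * (1/2)^(k+1) * ((n:ℝ) - 4*((k:ℝ)+1)) * (Real.sqrt 3/2)^(n-(k+1))) * key1 n k hk
      + (-(1/12:ℝ) * ((n:ℝ)-k) * ((n:ℝ)-4*k-4) * Real.sqrt (n.choose k) * (1/2)^k
          * (Real.sqrt 3/2)^(n-(k+1))) * hs3

-- lower-neighbor term, k = m+1
lemma hB (n m : ℕ) (hm : m < n) :
    (1/2) * Real.sqrt ((((m+1:ℕ)):ℝ) * ((n:ℝ) + 1 - (((m+1:ℕ)):ℝ))) * wv n m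
      = ((m:ℝ)+1) * ((n:ℝ) - 4*m) *
        (Real.sqrt (n.choose (m+1)) * (1/2)^(m+1) * (Real.sqrt 3 / 2)^(n-(m+1))) *
        (Real.sqrt 3 / 2) := by
  have he : n - m = (n - (m+1)) + 1 := by omega
  unfold wv
  rw [show ((((m+1:ℕ)):ℝ) * ((n:ℝ) + 1 - (((m+1:ℕ)):ℝ))) = (((m:ℝ)+1) * ((n:ℝ) - m)) from by
    push_cast; ring]
  rw [he, pow_succ]
  push_cast
  linear_combination
    ((1/2:ℝ) * (1/2)^m * (Real.sqrt 3/2)^(n-(m+1)) * (Real.sqrt 3/2) * ((n:ℝ)-4*m)) * key2 n m (le_of_lt hm)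

noncomputable def gfun (n k : ℕ) : ℕ → ℝ := fun j =>
  (if k + 1 = j then (1/2)*Real.sqrt ((j:ℝ)*((n:ℝ)+1-(j:ℝ)))
   else if j + 1 = k then (1/2)*Real.sqrt ((k:ℝ)*((n:ℝ)+1-(k:ℝ))) else 0) * wv n j

lemma sum_gfun (n k : ℕ) (hk : k ≤ n) :
    ∑ j ∈ range (n+1), gfun n k j
      = (1/2)*Real.sqrt (((k+1:ℕ):ℝ)*((n:ℝ)+1-((k+1:ℕ):ℝ))) * wv n (k+1)
        + (if k = 0 then 0 else (1/2)*Real.sqrt ((k:ℝ)*((n:ℝ)+1-(k:ℝ))) * wv n (k-1)) := by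
  have hext : ∑ j ∈ range (n+2), gfun n k j = ∑ j ∈ range (n+1), gfun n k j := by
    rw [Finset.sum_range_succ]
    have h0 : gfun n k (n+1) = 0 := by
      unfold gfun
      rcases eq_or_ne (k+1) (n+1) with h | h
      · rw [if_pos h, wv_top, mul_zero]
      · rw [if_neg h, if_neg (by omega)]; ring
    rw [h0, add_zero]
  rw [← hext]
  have hsplit : ∀ j, gfun n k j =
      (if k + 1 = j then (1/2)*Real.sqrt ((j:ℝ)*((n:ℝ)+1-(j:ℝ))) * wv n j else 0)
      + (if j + 1 = k then (1/2)*Real.sqrt ((k:ℝ)*((n:ℝ)+1-(k:ℝ))) * wv n j else 0) := by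
    intro j; unfold gfun
    split_ifs with h1 h2 h2 <;> first | (exfalso; omega) | ring
  rw [Finset.sum_congr rfl (fun j _ => hsplit j), Finset.sum_add_distrib]
  congr 1
  · rw [Finset.sum_ite_eq (range (n+2)) (k+1)
      (fun j => (1/2)*Real.sqrt ((j:ℝ)*((n:ℝ)+1-(j:ℝ))) * wv n j),
      if_pos (by simp; omega)]
  · rcases Nat.eq_zero_or_pos k with rfl | hkpos
    · simp
    · obtain ⟨m, rfl⟩ : ∃ m, k = m + 1 := ⟨k-1, by omega⟩
      simp only [add_left_inj]
      rw [Finset.sum_ite_eq' (range (n+2)) m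
        (fun j => (1/2)*Real.sqrt ((((m+1:ℕ)):ℝ)*((n:ℝ)+1-(((m+1:ℕ)):ℝ))) * wv n j),
        if_pos (by simp; omega), if_neg (by omega)]
      norm_num

lemma row_nat (n k : ℕ) (hk : k ≤ n) :
    -(Real.sqrt 3/2) * (∑ j ∈ range (n+1), gfun n k j)
      + -(1/2) * (((n:ℝ)/2 - (k:ℝ)) * wv n k)
      = -((n:ℝ)/2 - 1) * wv n k := by
  rw [sum_gfun n k hk]
  rcases Nat.eq_zero_or_pos k with rfl | hkpos
  · rw [if_pos rfl, add_zero, hA n 0 (Nat.zero_le n)]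
    unfold wv
    push_cast
    linear_combination ((-(1/12:ℝ))*(n:ℝ)*((n:ℝ)-4)
      * (Real.sqrt (n.choose 0) * (1/2)^(0:ℕ) * (Real.sqrt 3/2)^(n-0))) * hs3
  · obtain ⟨m, rfl⟩ : ∃ m, k = m + 1 := ⟨k-1, by omega⟩
    rw [if_neg (by omega), show m + 1 - 1 = m from rfl, hA n (m+1) hk, hB n m (by omega)]
    unfold wv
    push_cast
    linear_combination
      ((-(1/12:ℝ)*((n:ℝ)-(m:ℝ)-1)*((n:ℝ)-4*(m:ℝ)-8) - (1/4:ℝ)*((m:ℝ)+1)*((n:ℝ)-4*(m:ℝ)))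
          * (Real.sqrt (n.choose (m+1)) * (1/2)^(m+1) * (Real.sqrt 3/2)^(n-(m+1)))) * hs3

open Finset in
lemma row_fin (n : ℕ) (i : Fin (n+1)) :
    ∑ j : Fin (n+1), H0 n i j * wv n j.val = -((n:ℝ)/2 - 1) * wv n i.val := by
  have hk : i.val ≤ n := Nat.lt_succ_iff.mp i.isLt
  have hX : ∑ j : Fin (n+1), Xop n i j * wv n j.val = ∑ j ∈ range (n+1), gfun n i.val j := by
    rw [← Fin.sum_univ_eq_sum_range (gfun n i.val) (n+1)]
    exact Finset.sum_congr rfl (fun j _ => rfl)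
  have hZ : ∑ j : Fin (n+1), Zop n i j * wv n j.val = ((n:ℝ)/2 - (i.val:ℝ)) * wv n i.val := by
    simp [Zop, Matrix.diagonal_apply, ite_mul]
  calc ∑ j : Fin (n+1), H0 n i j * wv n j.val
      = -(Real.sqrt 3/2) * (∑ j : Fin (n+1), Xop n i j * wv n j.val)
        + -(1/2) * (∑ j : Fin (n+1), Zop n i j * wv n j.val) := by
        rw [Finset.mul_sum, Finset.mul_sum, ← Finset.sum_add_distrib]
        exact Finset.sum_congr rfl (fun j _ => by
          simp only [H0, Matrix.add_apply, Matrix.smul_apply, smul_eq_mul]; ring)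
    _ = -(Real.sqrt 3/2) * (∑ j ∈ range (n+1), gfun n (i.val) j)
        + -(1/2) * (((n:ℝ)/2 - (i.val:ℝ)) * wv n i.val) := by rw [hX, hZ]
    _ = -((n:ℝ)/2 - 1) * wv n i.val := row_nat n i.val hk

lemma psi1_eq_wv (n : ℕ) (j : Fin (n+1)) :
    psi1 n j = wv n j.val * (Real.sqrt (3*(n:ℝ)))⁻¹ := by
  unfold psi1 wv
  rw [Real.sqrt_div (by positivity)]
  ring

/-- ψ₁ is a unit eigenvectorψ₁ is a unit eigenvector of H₀ with eigenvalue -(n/2 - 1). -/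
theorem psi1_eigenvector (n : ℕ) (hn : 0 < n) :
    (H0 n).mulVec (psi1 n) = (-((n : ℝ)/2 - 1)) • psi1 n ∧
      ∑ k : Fin (n + 1), (psi1 n k)^2 = 1 := by
  constructor
  · funext i
    have h1 : (H0 n).mulVec (psi1 n) i = ∑ j : Fin (n+1), H0 n i j * psi1 n j := by
      simp [Matrix.mulVec, dotProduct]
    rw [h1]
    calc ∑ j : Fin (n+1), H0 n i j * psi1 n j
        = (∑ j : Fin (n+1), H0 n i j * wv n j.val) * (Real.sqrt (3*(n:ℝ)))⁻¹ := by
          rw [Finset.sum_mul]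
          exact Finset.sum_congr rfl (fun j _ => by rw [psi1_eq_wv]; ring)
      _ = (-((n:ℝ)/2 - 1) * wv n i.val) * (Real.sqrt (3*(n:ℝ)))⁻¹ := by rw [row_fin]
      _ = (-((n : ℝ)/2 - 1)) • psi1 n i := by
          rw [smul_eq_mul, psi1_eq_wv]; ring
  · have hsq : ∀ k : Fin (n+1), (psi1 n k)^2 =
        ((n.choose k.val : ℝ) * (1/4)^k.val * (3/4)^(n-k.val) * ((n:ℝ)-4*(k.val:ℝ))^2) / (3*(n:ℝ)) := by
      intro k
      unfold psi1
      have e1 : ((1/2:ℝ)^k.val)^2 = (1/4:ℝ)^k.val := by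
        rw [← pow_mul, mul_comm k.val 2, pow_mul]; norm_num
      have e2 : ((Real.sqrt 3/2)^(n-k.val))^2 = (3/4:ℝ)^(n-k.val) := by
        rw [← pow_mul, mul_comm (n-k.val) 2, pow_mul, div_pow, Real.sq_sqrt (by norm_num)]
        norm_num
      have e3 : (Real.sqrt ((n.choose k.val : ℝ) / (3*(n:ℝ))))^2 = (n.choose k.val : ℝ) / (3*(n:ℝ)) :=
        Real.sq_sqrt (by positivity)
      calc (Real.sqrt ((n.choose k.val : ℝ) / (3 * (n : ℝ))) * (1/2)^k.val *
            (Real.sqrt 3 / 2)^(n - k.val) * ((n : ℝ) - 4 * (k.val : ℝ)))^2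
          = (Real.sqrt ((n.choose k.val : ℝ) / (3*(n:ℝ))))^2 * ((1/2:ℝ)^k.val)^2 *
            ((Real.sqrt 3/2)^(n-k.val))^2 * ((n:ℝ)-4*(k.val:ℝ))^2 := by ring
        _ = _ := by rw [e1, e2, e3]; ring
    rw [Finset.sum_congr rfl (fun k _ => hsq k)]
    rw [Fin.sum_univ_eq_sum_range
      (fun k => ((n.choose k : ℝ) * (1/4)^k * (3/4)^(n-k) * ((n:ℝ)-4*(k:ℝ))^2) / (3*(n:ℝ))) (n+1)]
    rw [← Finset.sum_div, sum_main n]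
    have : (n:ℝ) ≠ 0 := Nat.cast_ne_zero.mpr hn.ne'
    field_simp
end

section
/- Let n be divisible by 4, and let |psi_0> and |psi_1> be the vectors with components <k|psi_0> = sqrt(C(n,k))(1/2)^k(sqrt(3)/2)^{n-k} and <k|psi_1> = sqrt(C(n,k)/(3n))(1/2)^k(sqrt(3)/2)^{n-k}(n-4k). Define |psi_abs> by <k|psi_abs> = |<k|psi_1>|. Then the inner product <psi_abs|psi_0> = (sqrt(3n)/2) * C(n, n/4) * (1/4)^{n/4} * (3/4)^{3n/4}. -/
open Matrix

noncomputable def tfun (n : ℕ) : ℕ → ℝ :=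
  fun k => (k : ℝ) * (3/4) * (n.choose k : ℝ) * (1/4)^k * (3/4)^(n-k)

lemma step_tfun (n k : ℕ) (hk : k ≤ n) :
    (n.choose k : ℝ) * (1/4)^k * (3/4)^(n-k) * ((k : ℝ) - (n : ℝ)/4)
      = tfun n k - tfun n (k+1) := by
  unfold tfun
  rcases eq_or_lt_of_le hk with rfl | hk'
  · simp [Nat.choose_succ_self]
    ring
  · have h1 : (n.choose (k+1) : ℝ) * ((k:ℝ)+1) = (n.choose k : ℝ) * ((n:ℝ) - (k:ℝ)) := by
      have h2 := congrArg (Nat.cast : ℕ → ℝ) (Nat.choose_succ_right_eq n k)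
      push_cast [Nat.cast_sub hk] at h2
      linarith [h2]
    have he : n - k = (n - (k+1)) + 1 := by omega
    rw [he, pow_succ, pow_succ]
    push_cast
    linear_combination ((3:ℝ)/16 * (1/4)^k * (3/4)^(n-(k+1))) * h1

lemma sum_abs_eq (m : ℕ) (hm : 0 < m) :
    ∑ j ∈ Finset.range (4*m+1),
        (((4*m).choose j : ℝ) * (1/4)^j * (3/4)^(4*m-j) * |((4*m : ℕ):ℝ) - 4*(j:ℝ)|)
      = 3*(4*m : ℕ)/2 * (((4*m).choose m : ℝ)) * (1/4)^m * (3/4)^(3*m) := by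
  set n := 4*m with hn
  have hnm : (n:ℝ) = 4*(m:ℝ) := by push_cast [hn]; ring
  have habs1 : ∀ j ∈ Finset.range (m+1),
      ((n.choose j : ℝ) * (1/4)^j * (3/4)^(n-j) * |(n:ℝ) - 4*(j:ℝ)|)
        = 4 * (tfun n (j+1) - tfun n j) := by
    intro j hj
    rw [Finset.mem_range] at hj
    have hjm : (j:ℝ) ≤ m := by exact_mod_cast Nat.lt_succ_iff.mp hj
    have : |(n:ℝ) - 4*(j:ℝ)| = (n:ℝ) - 4*(j:ℝ):= abs_of_nonneg (by rw [hnm]; linarith)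
    rw [this, ← neg_sub (tfun n j), ← step_tfun n j (by omega)]
    rw [hnm]; ring
  have habs2 : ∀ i ∈ Finset.range (3*m),
      ((n.choose (m+1+i) : ℝ) * (1/4)^(m+1+i) * (3/4)^(n-(m+1+i)) * |(n:ℝ) - 4*((m+1+i : ℕ):ℝ)|)
        = 4 * (tfun n (m+1+i) - tfun n (m+1+i+1)) := by
    intro i hi
    rw [Finset.mem_range] at hi
    have : |(n:ℝ) - 4*((m+1+i : ℕ):ℝ)| = 4*((m+1+i : ℕ):ℝ) - (n:ℝ) := by
      rw [abs_sub_comm]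
      refine abs_of_nonneg ?_
      push_cast [hnm]; linarith
    rw [this, ← step_tfun n (m+1+i) (by omega)]
    push_cast [hnm]; ring
  rw [Finset.range_eq_Ico, ← Finset.sum_Ico_consecutive _ (Nat.zero_le (m+1)) (by omega : m+1 ≤ n+1)]
  rw [← Finset.range_eq_Ico]
  rw [Finset.sum_congr rfl habs1, Finset.sum_Ico_eq_sum_range]
  have h31 : n + 1 - (m+1) = 3*m := by omega
  rw [h31]
  have hre : ∀ i ∈ Finset.range (3*m),
      ((n.choose (m+1+i) : ℝ) * (1/4)^(m+1+i) * (3/4)^(n-(m+1+i)) * |(n:ℝ) - 4*((m+1+i : ℕ):ℝ)|)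
        = 4 * (tfun n (m+1+i) - tfun n (m+1+i+1)) := habs2
  rw [Finset.sum_congr rfl hre]
  rw [← Finset.mul_sum, ← Finset.mul_sum, Finset.sum_range_sub (tfun n)]
  have htel : ∑ i ∈ Finset.range (3*m), (tfun n (m+1+i) - tfun n (m+1+i+1))
      = tfun n (m+1) - tfun n (m+1+3*m) := by
    have h := Finset.sum_range_sub' (fun i => tfun n (m+1+i)) (3*m)
    simpa [add_assoc] using h
  rw [htel]
  have ht0 : tfun n 0 = 0 := by simp [tfun]
  have htn : tfun n (m+1+3*m) = 0 := by
    have : m+1+3*m = n+1 := by omega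
    rw [this]; simp [tfun, Nat.choose_succ_self]
  rw [ht0, htn]
  have hval : tfun n (m+1) = ((m:ℝ)+1) * (3/4) * (n.choose (m+1) : ℝ) * (1/4)^(m+1) * (3/4)^(3*m-1) := by
    have : n - (m+1) = 3*m-1 := by omega
    simp [tfun, this]
  have hch : (n.choose (m+1) : ℝ) * ((m:ℝ)+1) = (n.choose m : ℝ) * (3*(m:ℝ)) := by
    have h2 := congrArg (Nat.cast : ℕ → ℝ) (Nat.choose_succ_right_eq n m)
    have hnmm : n - m = 3*m := by omega
    rw [hnmm] at h2
    push_cast at h2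
    linarith
  have hpow : (3/4:ℝ)^(3*m) = (3/4)^(3*m-1) * (3/4) := by
    rw [← pow_succ]
    congr 1; omega
  rw [hval, hnm, hpow, pow_succ]
  linear_combination ((3:ℝ)/2 * (1/4)^m * (3/4)^(3*m-1)) * hch

lemma term_abs_eq (n : ℕ) (k : Fin (n+1)) :
    |psi1 n k| * psi0 n k
      = (n.choose k.val : ℝ) * (1/4)^k.val * (3/4)^(n - k.val)
          * |(n:ℝ) - 4*(k.val:ℝ)| / Real.sqrt (3*(n:ℝ)) := by
  unfold psi1 psi0
  set j := k.val
  rw [abs_mul, abs_mul, abs_mul, abs_of_nonneg (Real.sqrt_nonneg _),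
    abs_of_nonneg (by positivity : (0:ℝ) ≤ ((1:ℝ)/2)^j),
    abs_of_nonneg (by positivity : (0:ℝ) ≤ (Real.sqrt 3/2)^(n-j))]
  rw [Real.sqrt_div (Nat.cast_nonneg _)]
  have hC : Real.sqrt (n.choose j : ℝ) * Real.sqrt (n.choose j : ℝ) = (n.choose j : ℝ) :=
    Real.mul_self_sqrt (Nat.cast_nonneg _)
  have hp : ((1:ℝ)/2)^j * (1/2)^j = ((1:ℝ)/4)^j := by rw [← mul_pow]; norm_num
  have hq : (Real.sqrt 3/2)^(n-j) * (Real.sqrt 3/2)^(n-j) = ((3:ℝ)/4)^(n-j) := by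
    rw [← mul_pow, div_mul_div_comm, Real.mul_self_sqrt (by norm_num : (0:ℝ) ≤ 3)]
    norm_num
  have hre : (Real.sqrt (n.choose j : ℝ) / Real.sqrt (3*(n:ℝ)) * (1/2)^j * (Real.sqrt 3/2)^(n-j)
        * |(n:ℝ) - 4*(j:ℝ)|) * (Real.sqrt (n.choose j : ℝ) * (1/2)^j * (Real.sqrt 3/2)^(n-j))
      = (Real.sqrt (n.choose j : ℝ) * Real.sqrt (n.choose j : ℝ)) * (((1:ℝ)/2)^j * (1/2)^j)
          * ((Real.sqrt 3/2)^(n-j) * (Real.sqrt 3/2)^(n-j)) * |(n:ℝ) - 4*(j:ℝ)|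
          / Real.sqrt (3*(n:ℝ)) := by ring
  rw [hre, hC, hp, hq]

/-- Overlap of |ψ_abs⟩ (componentwise absolute value of ψ₁) with ψ₀:
⟨ψ_abs|ψ₀⟩ = (√(3n)/2) C(n,n/4) (1/4)^(n/4) (3/4)^(3n/4). -/
theorem psiAbs_inner_psi0 (n : ℕ) (hn : 0 < n) (h4 : 4 ∣ n) :
    ∑ k : Fin (n + 1), |psi1 n k| * psi0 n k
      = (Real.sqrt (3 * (n : ℝ)) / 2) * (n.choose (n/4) : ℝ) *
        (1/4)^(n/4) * (3/4)^(3*n/4) := by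
  obtain ⟨m, rfl⟩ := h4
  have hm0 : 0 < m := by omega
  have hpos : (0:ℝ) < 3 * ((4*m:ℕ):ℝ) := by
    have : (0:ℝ) < ((4*m:ℕ):ℝ) := by exact_mod_cast (by omega : 0 < 4*m)
    linarith
  have hs : Real.sqrt (3 * ((4*m:ℕ):ℝ)) ≠ 0 := (Real.sqrt_pos.mpr hpos).ne'
  simp only [term_abs_eq]
  rw [Fin.sum_univ_eq_sum_range (fun j => ((4*m).choose j : ℝ) * (1/4)^j * (3/4)^(4*m - j)
    * |((4*m:ℕ):ℝ) - 4*(j:ℝ)| / Real.sqrt (3*((4*m:ℕ):ℝ))) (4*m+1)]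
  rw [← Finset.sum_div, sum_abs_eq m hm0]
  have e1 : 4*m/4 = m := by omega
  have e2 : 3*(4*m)/4 = 3*m := by omega
  rw [e1, e2, div_eq_iff hs]
  have hss := Real.mul_self_sqrt hpos.le
  linear_combination (-(((4*m).choose m : ℝ)) * (1/4)^m * (3/4)^(3*m) / 2) * hss
end

section
/- With |psi_1> as above and |psi_abs> its componentwise absolute value, and X the tridiagonal matrix with <k-1|X|k> = <k|X|k-1> = (1/2)sqrt(k(n+1-k)), one has <psi_abs|X|psi_abs> = <psi_1|X|psi_1>, provided n is divisible by 4. -/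
open Matrix

lemma sign_lemma (m k : ℕ) : 0 ≤ ((4*m:ℝ) - 4*k) * ((4*m:ℝ) - 4*((k:ℝ)+1)) := by
  rcases lt_or_ge k m with h | h
  · have : (k:ℝ)+1 ≤ m := by exact_mod_cast h
    nlinarith
  · have : (m:ℝ) ≤ k := by exact_mod_cast h
    nlinarith

lemma adj_nonneg (n : ℕ) (h4 : 4 ∣ n) (i j : Fin (n+1)) (hij : i.val + 1 = j.val) :
    0 ≤ psi1 n i * psi1 n j := by
  obtain ⟨m, rfl⟩ := h4
  unfold psi1
  have hSi : 0 ≤ Real.sqrt (((4*m).choose i.val : ℝ) / (3 * ((4*m : ℕ) : ℝ))) * (1/2)^i.val *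
      (Real.sqrt 3 / 2)^(4*m - i.val) := by positivity
  have hSj : 0 ≤ Real.sqrt (((4*m).choose j.val : ℝ) / (3 * ((4*m : ℕ) : ℝ))) * (1/2)^j.val *
      (Real.sqrt 3 / 2)^(4*m - j.val) := by positivity
  have hj : (j.val : ℝ) = (i.val : ℝ) + 1 := by exact_mod_cast hij.symm
  have hsign := sign_lemma m i.val
  rw [hj]
  push_cast at hSi hSj ⊢
  nlinarith [mul_nonneg (mul_nonneg hSi hSj) hsign]

/-- Taking the componentwise absolute value of ψ₁ leaves the expectation of X
unchanged (since ⟨n/4|ψ₁⟩ = 0 when 4 ∣ n). -/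
theorem psiAbs_X_expectation (n : ℕ) (hn : 0 < n) (h4 : 4 ∣ n) :
    (fun k => |psi1 n k|) ⬝ᵥ (Xop n).mulVec (fun k => |psi1 n k|)
      = psi1 n ⬝ᵥ (Xop n).mulVec (psi1 n) := by
  simp only [dotProduct, mulVec, Finset.mul_sum]
  refine Finset.sum_congr rfl fun i _ => Finset.sum_congr rfl fun j _ => ?_
  unfold Xop
  split_ifs with h1 h2
  · have h := adj_nonneg n h4 i j h1
    have : |psi1 n i| * |psi1 n j| = psi1 n i * psi1 n j := by
      rw [← abs_mul, abs_of_nonneg h]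
    linear_combination (1/2 * Real.sqrt ((j.val:ℝ) * ((n:ℝ)+1-(j.val:ℝ)))) * this
  · have h := adj_nonneg n h4 j i h2
    have : |psi1 n i| * |psi1 n j| = psi1 n i * psi1 n j := by
      rw [← abs_mul, abs_of_nonneg (by linarith [h] : 0 ≤ psi1 n i * psi1 n j)]
    linear_combination (1/2 * Real.sqrt ((i.val:ℝ) * ((n:ℝ)+1-(i.val:ℝ)))) * this
  · simp
end

section
/- Fix n divisible by 4, alpha > 1, and s* = (sqrt(3)-1)/2. Let H = -(sqrt(3)/2)X - (1/2)Z + (1/2)H_sp, where H_sp = (3/4) n^alpha |n/4><n/4|, and X, Z are the symmetric-subspace angular momentum matrices. Then the spectral gap of H satisfies gap(n) <= 3n/(3n + 3n^alpha - 8) for n large enough that 3n^alpha > 8; in particular gap(n) = O(n^{1-alpha}) tends to 0 as n tends to infinity. -/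
/-!
The spike sits at `k = n/4`, exactly where `ψ₁ ∝ (n - 4k) ψ₀` vanishes, so `ψ₁` remains an
eigenvector of `H` with eigenvalue `μ = -(n/2 - 1)`. The vector `|ψ₁|` has Rayleigh quotient `μ`
but is not an eigenvector (the spike site sees its neighbours), so `H - μ` is not positive
semidefinite and some eigenvalue lies strictly below `μ`; hence `λ₁ ≤ μ`.
For the lower bound, `H` is stoquastic, so a Collatz–Wielandt argument shows that every eigenvalue
is at least `θ` as soon as some positive vector `v` satisfies `H v ≥ θ v` componentwise; the
vector `v = (|n - 4k| + y) ψ₀` with `y = 12n/(3n^α - 8)` gives `θ = μ - 3n/(3n + 3n^α - 8)`.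
-/

open Matrix

/-- The index n/4 where the spike sits. -/
def spikeIdx (n : ℕ) : Fin (n + 1) := ⟨n / 4, Nat.lt_succ_of_le (Nat.div_le_self n 4)⟩

/-- The width-1 spike Hamiltonian at the critical point s* = (√3-1)/2:
H = -(√3/2)X - (1/2)Z + (1/2)·(3/4)n^α |n/4⟩⟨n/4|. -/
noncomputable def Hspike (n : ℕ) (α : ℝ) : Matrix (Fin (n + 1)) (Fin (n + 1)) ℝ :=
  H0 n + Matrix.single (spikeIdx n) (spikeIdx n) ((3/8) * (n : ℝ)^α)

/-- The eigenvalues of a Hermitian real matrix, sorted in ascending order. -/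
noncomputable def sortedEigenvalues {N : ℕ} {A : Matrix (Fin N) (Fin N) ℝ}
    (hA : A.IsHermitian) : Fin N → ℝ :=
  hA.eigenvalues ∘ Tuple.sort hA.eigenvalues

theorem Matrix.IsHermitian.exists_eigenvalues_eq {𝕜 n : Type*} [RCLike 𝕜] [Fintype n]
    [DecidableEq n] {A : Matrix n n 𝕜} (hA : A.IsHermitian) {μ : ℝ} {u : n → 𝕜} (hu : u ≠ 0)
    (hAu : A *ᵥ u = (μ : 𝕜) • u) : ∃ i, hA.eigenvalues i = μ := by
  have hμ : (μ : 𝕜) ∈ spectrum 𝕜 A := by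
    rw [← Matrix.spectrum_toLin']
    refine Module.End.HasEigenvalue.mem_spectrum
      (Module.End.hasEigenvalue_of_hasEigenvector ⟨?_, hu⟩)
    simpa [Module.End.mem_eigenspace_iff] using hAu
  obtain ⟨_, ⟨i, rfl⟩, hi⟩ := hA.spectrum_eq_image_range ▸ hμ
  exact ⟨i, RCLike.ofReal_injective hi⟩

open scoped ComplexOrder in
theorem Matrix.IsHermitian.exists_eigenvalues_lt {𝕜 n : Type*} [RCLike 𝕜] [Fintype n]
    [DecidableEq n] {A : Matrix n n 𝕜} (hA : A.IsHermitian) {μ : ℝ} {x : n → 𝕜}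
    (hx : star x ⬝ᵥ (A - (μ : 𝕜) • 1) *ᵥ x = 0) (hAx : (A - (μ : 𝕜) • 1) *ᵥ x ≠ 0) :
    ∃ i, hA.eigenvalues i < μ := by
  by_contra! h
  have hpsd : (A - (μ : 𝕜) • 1).PosSemidef := by
    refine posSemidef_iff_isHermitian_and_spectrum_nonneg.2
      ⟨hA.sub (isHermitian_one.smul (RCLike.conj_ofReal μ)), ?_⟩
    rw [← Algebra.algebraMap_eq_smul_one, ← spectrum.sub_singleton_eq, hA.spectrum_eq_image_range]
    rintro _ ⟨_, ⟨_, ⟨i, rfl⟩, rfl⟩, _, rfl, rfl⟩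
    show (0 : 𝕜) ≤ _ - _
    rw [← RCLike.ofReal_sub, RCLike.ofReal_nonneg]
    exact sub_nonneg.2 (h i)
  exact hAx ((hpsd.dotProduct_mulVec_zero_iff x).1 hx)

section CollatzWielandt

variable {R n : Type*} [Field R] [LinearOrder R] [IsStrictOrderedRing R] [Fintype n]
  {A : Matrix n n R}

theorem Matrix.mulVec_apply_nonpos_of_offDiag_nonpos (hA : ∀ i j, i ≠ j → A i j ≤ 0)
    {w : n → R} (hw : 0 ≤ w) {k : n} (hwk : w k = 0) : (A *ᵥ w) k ≤ 0 := by
  refine Finset.sum_nonpos fun j _ => ?_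
  rcases eq_or_ne k j with rfl | hkj
  · simp [hwk]
  · exact mul_nonpos_of_nonpos_of_nonneg (hA k j hkj) (hw j)

theorem Matrix.le_eigenvalue_of_le_mulVec_of_offDiag_nonpos (hA : ∀ i j, i ≠ j → A i j ≤ 0)
    {v : n → R} (hv : ∀ k, 0 < v k) {θ : R} (hθ : ∀ k, θ * v k ≤ (A *ᵥ v) k)
    {μ : R} {u : n → R} (hu : u ≠ 0) (hAu : A *ᵥ u = μ • u) : θ ≤ μ := by
  wlog hpos : ∃ k, 0 < u k generalizing u
  · obtain ⟨k, hk⟩ := Function.ne_iff.mp hu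
    push Not at hpos
    refine this (neg_ne_zero.2 hu) (by rw [mulVec_neg, hAu, smul_neg]) ⟨k, ?_⟩
    simpa using (hpos k).lt_of_ne hk
  obtain ⟨k, hk⟩ := hpos
  obtain ⟨K, -, hK⟩ := Finset.exists_max_image Finset.univ (fun j => u j / v j)
    ⟨k, Finset.mem_univ k⟩
  set t := u K / v K
  have ht : 0 < t := (div_pos hk (hv k)).trans_le (hK k (Finset.mem_univ k))
  have htK : t * v K = u K := div_mul_cancel₀ _ (hv K).ne'
  have hw : 0 ≤ t • v - u := fun j => by
    have := hK j (Finset.mem_univ j)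
    rw [div_le_iff₀ (hv j)] at this
    simpa using this
  have hwK : (t • v - u) K = 0 := by simp [htK]
  have key := Matrix.mulVec_apply_nonpos_of_offDiag_nonpos hA hw hwK
  rw [mulVec_sub, mulVec_smul, hAu] at key
  simp only [Pi.sub_apply, Pi.smul_apply, smul_eq_mul, ← htK] at key
  nlinarith [mul_le_mul_of_nonneg_left (hθ K) ht.le, mul_pos ht (hv K)]

end CollatzWielandt

theorem Tuple.sort_apply_one_le {α : Type*} [LinearOrder α] {N : ℕ} (hN : 1 < N)
    (f : Fin N → α) {i j : Fin N} (hij : i ≠ j) {a : α} (hi : f i ≤ a) (hj : f j ≤ a) :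
    (f ∘ Tuple.sort f) ⟨1, hN⟩ ≤ a := by
  set σ := Tuple.sort f
  have key : ∀ l, f l ≤ a → (σ.symm l : ℕ) ≠ 0 → (f ∘ σ) ⟨1, hN⟩ ≤ a := fun l hl h0 => by
    refine (Tuple.monotone_sort f (show 1 ≤ (σ.symm l : ℕ) by omega)).trans ?_
    show f (σ (σ.symm l)) ≤ a
    rwa [Equiv.apply_symm_apply]
  by_cases h0 : (σ.symm i : ℕ) = 0
  · refine key j hj fun h => hij (σ.symm.injective (Fin.ext ?_))
    omega
  · exact key i hi h0

theorem Fin.sum_ite_val_eq {M : Type*} [AddCommMonoid M] (n a : ℕ) (c : M) :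
    ∑ j : Fin (n + 1), (if (j : ℕ) = a then c else 0) = if a ≤ n then c else 0 := by
  rw [Fin.sum_univ_eq_sum_range (fun j => if j = a then c else 0), Finset.sum_ite_eq']
  simp

/-- `⟨k-1|X|k⟩`; it vanishes at `k = 0` and `k = n + 1`. -/
noncomputable def xCoeff (n k : ℕ) : ℝ := 1 / 2 * √(k * ((n : ℝ) + 1 - k))

lemma xCoeff_zero (n : ℕ) : xCoeff n 0 = 0 := by simp [xCoeff]

lemma xCoeff_succ_self (n : ℕ) : xCoeff n (n + 1) = 0 := by simp [xCoeff]

lemma xCoeff_succ_sq {n k : ℕ} (hk : k ≤ n) : xCoeff n (k + 1) ^ 2 = (k + 1) * (n - k) / 4 := by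
  have : (0 : ℝ) ≤ (k + 1 : ℕ) * ((n : ℝ) + 1 - (k + 1 : ℕ)) := by
    have : (k : ℝ) ≤ n := by exact_mod_cast hk
    push_cast; nlinarith
  rw [xCoeff, mul_pow, Real.sq_sqrt this]
  push_cast; ring

lemma Xop_mulVec (n : ℕ) (g : ℕ → ℝ) (k : Fin (n + 1)) :
    (Xop n *ᵥ fun j => g j) k = xCoeff n (k + 1) * g (k + 1) + xCoeff n k * g (k - 1) := by
  have hsplit : ∀ j : Fin (n + 1), Xop n k j * g j =
      (if (j : ℕ) = k + 1 then xCoeff n (k + 1) * g (k + 1) else 0) +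
      (if (j : ℕ) = k - 1 then xCoeff n k * g (k - 1) else 0) := fun j => by
    rcases Nat.eq_zero_or_pos (k : ℕ) with hk | hk
    · simp only [Xop, xCoeff, hk]
      split_ifs <;> simp_all
    · simp only [Xop, xCoeff]
      split_ifs <;> first | omega | simp_all
  change ∑ j, Xop n k j * g j = _
  rw [Finset.sum_congr rfl fun j _ => hsplit j, Finset.sum_add_distrib, Fin.sum_ite_val_eq,
    Fin.sum_ite_val_eq, if_pos (show (k : ℕ) - 1 ≤ n by omega)]
  split_ifs with hk
  · rfl
  · rw [show (k : ℕ) = n by omega, xCoeff_succ_self, zero_mul]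

/-- `psi0` indexed by `ℕ`; it vanishes for `k > n`. -/
noncomputable def amp (n k : ℕ) : ℝ := √(n.choose k) * (1 / 2) ^ k * (√3 / 2) ^ (n - k)

lemma amp_nonneg (n k : ℕ) : 0 ≤ amp n k := by unfold amp; positivity

lemma amp_pos {n k : ℕ} (hk : k ≤ n) : 0 < amp n k := by
  have : (0 : ℝ) < n.choose k := by exact_mod_cast Nat.choose_pos hk
  unfold amp; positivity

lemma amp_sq (n k : ℕ) : amp n k ^ 2 = n.choose k * (1 / 4) ^ k * (3 / 4) ^ (n - k) := by
  have h3 : (√3 / 2) ^ 2 = 3 / 4 := by rw [div_pow, Real.sq_sqrt (by norm_num)]; norm_num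
  rw [amp, mul_pow, mul_pow, Real.sq_sqrt (Nat.cast_nonneg _), ← pow_mul, ← pow_mul,
    mul_comm k, mul_comm (n - k), pow_mul, pow_mul, h3]
  norm_num

lemma cast_choose_succ_mul {n k : ℕ} (hk : k ≤ n) :
    (n.choose (k + 1) : ℝ) * (k + 1) = n.choose k * (n - k) := by
  rw [← Nat.cast_sub hk]
  exact_mod_cast Nat.choose_succ_right_eq n k

lemma xCoeff_succ_mul_amp_succ {n k : ℕ} (hk : k ≤ n) :
    xCoeff n (k + 1) * amp n (k + 1) = √3 / 6 * (n - k) * amp n k := by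
  rcases hk.lt_or_eq with hk | rfl
  · have hnk : (0 : ℝ) ≤ n - k := sub_nonneg.2 (by exact_mod_cast hk.le)
    have hx : 0 ≤ xCoeff n (k + 1) := by unfold xCoeff; positivity
    refine (pow_left_inj₀ (mul_nonneg hx (amp_nonneg _ _))
      (mul_nonneg (by positivity) (amp_nonneg _ _)) two_ne_zero).1 ?_
    have h3 : (√3 / 6) ^ 2 = 1 / 12 := by rw [div_pow, Real.sq_sqrt (by norm_num)]; norm_num
    rw [mul_pow, mul_pow, mul_pow, xCoeff_succ_sq hk.le, amp_sq, amp_sq, h3,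
      show n - k = n - (k + 1) + 1 by omega]
    linear_combination ((n : ℝ) - k) / 4 * (1 / 4) ^ (k + 1) * (3 / 4) ^ (n - (k + 1)) *
      cast_choose_succ_mul hk.le
  · simp [xCoeff_succ_self]

lemma xCoeff_succ_mul_amp {n k : ℕ} (hk : k < n) :
    xCoeff n (k + 1) * amp n k = √3 / 2 * (k + 1) * amp n (k + 1) := by
  have hx : 0 ≤ xCoeff n (k + 1) := by unfold xCoeff; positivity
  refine (pow_left_inj₀ (mul_nonneg hx (amp_nonneg _ _))
    (mul_nonneg (by positivity) (amp_nonneg _ _)) two_ne_zero).1 ?_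
  have h3 : (√3 / 2) ^ 2 = 3 / 4 := by rw [div_pow, Real.sq_sqrt (by norm_num)]; norm_num
  rw [mul_pow, mul_pow, mul_pow, xCoeff_succ_sq hk.le, amp_sq, amp_sq, h3,
    show n - k = n - (k + 1) + 1 by omega]
  linear_combination -(3 / 16) * ((k : ℝ) + 1) * (1 / 4) ^ k * (3 / 4) ^ (n - (k + 1)) *
    cast_choose_succ_mul hk.le

noncomputable def ampMul (n : ℕ) (f : ℤ → ℝ) : Fin (n + 1) → ℝ := fun j => f j * amp n j

/-- `ψ₀⁻¹ H₀ ψ₀`, acting on the multiplier `f` of `ψ₀`. -/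
noncomputable def reducedH0 (n : ℕ) (f : ℤ → ℝ) (k : ℕ) : ℝ :=
  -((n - k) / 4 * f (k + 1) + 3 * k / 4 * f (k - 1) + (n / 4 - k / 2) * f k)

lemma H0_mulVec_ampMul (n : ℕ) (f : ℤ → ℝ) (k : Fin (n + 1)) :
    (H0 n *ᵥ ampMul n f) k = reducedH0 n f k * amp n k := by
  have h3 : √3 * √3 = 3 := Real.mul_self_sqrt (by norm_num)
  have hX := Xop_mulVec n (fun j => f j * amp n j) k
  unfold ampMul
  simp only [H0, Zop, add_mulVec, smul_mulVec, Pi.add_apply, Pi.smul_apply, smul_eq_mul,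
    mulVec_diagonal, hX]
  obtain ⟨_ | k, hk⟩ := k
  · have hup := xCoeff_succ_mul_amp_succ (Nat.zero_le n)
    simp only [xCoeff_zero, reducedH0] at hup ⊢
    push_cast at hup ⊢
    linear_combination (-(√3 / 2) * f 1) * hup - (n / 12 * f 1 * amp n 0) * h3
  · have hup := xCoeff_succ_mul_amp_succ (show k + 1 ≤ n by omega)
    have hdown := xCoeff_succ_mul_amp (show k < n by omega)
    simp only [reducedH0, Nat.add_sub_cancel] at hup hdown ⊢
    push_cast at hup hdown ⊢
    simp only [add_sub_cancel_right]
    linear_combination (-(√3 / 2) * f (k + 1 + 1)) * hup + (-(√3 / 2) * f k) * hdown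
      - ((n - (k + 1)) / 12 * f (k + 1 + 1) + (k + 1) / 4 * f k) * amp n (k + 1) * h3

lemma reducedH0_tilt (n k : ℕ) :
    reducedH0 n (fun j => n - 4 * j) k = -((n : ℝ) / 2 - 1) * (n - 4 * k) := by
  simp only [reducedH0]; push_cast; ring

lemma reducedH0_add_const (n : ℕ) (f : ℤ → ℝ) (c : ℝ) (k : ℕ) :
    reducedH0 n (fun j => f j + c) k = reducedH0 n f k - n / 2 * c := by
  simp only [reducedH0]; ring

lemma reducedH0_abs_tilt_of_ne {n m k : ℕ} (hm : n = 4 * m) (hk : k ≠ m) :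
    reducedH0 n (fun j => |(n : ℝ) - 4 * j|) k = -((n : ℝ) / 2 - 1) * |(n : ℝ) - 4 * k| := by
  have hn : (n : ℝ) = 4 * m := by exact_mod_cast hm
  simp only [reducedH0]
  push_cast
  rcases hk.lt_or_gt with hk | hk
  · have hk' : (k : ℝ) + 1 ≤ m := by exact_mod_cast hk
    rw [abs_of_nonneg (by linarith), abs_of_nonneg (by linarith), abs_of_nonneg (by linarith)]
    ring
  · have hk' : (m : ℝ) + 1 ≤ k := by exact_mod_cast hk
    rw [abs_of_nonpos (by linarith), abs_of_nonpos (by linarith), abs_of_nonpos (by linarith)]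
    ring

lemma reducedH0_abs_tilt_self {n m : ℕ} (hm : n = 4 * m) :
    reducedH0 n (fun j => |(n : ℝ) - 4 * j|) m = -(3 * n / 2) := by
  have hn : (n : ℝ) = 4 * m := by exact_mod_cast hm
  simp only [reducedH0]
  push_cast
  rw [hn, show 4 * (m : ℝ) - 4 * (m + 1) = -4 by ring, show 4 * (m : ℝ) - 4 * (m - 1) = 4 by ring]
  norm_num
  ring

lemma four_le_abs_tilt {n m k : ℕ} (hm : n = 4 * m) (hk : k ≠ m) : 4 ≤ |(n : ℝ) - 4 * k| := by
  have hn : (n : ℝ) = 4 * m := by exact_mod_cast hm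
  rcases hk.lt_or_gt with hk | hk
  · have : (k : ℝ) + 1 ≤ m := by exact_mod_cast hk
    rw [abs_of_nonneg (by linarith)]; linarith
  · have : (m : ℝ) + 1 ≤ k := by exact_mod_cast hk
    rw [abs_of_nonpos (by linarith)]; linarith

lemma spikeIdx_val {n m : ℕ} (hm : n = 4 * m) : (spikeIdx n : ℕ) = m := by
  simp [spikeIdx, hm]

lemma Hspike_apply_nonpos_of_ne (n : ℕ) (α : ℝ) {i j : Fin (n + 1)} (hij : i ≠ j) :
    Hspike n α i j ≤ 0 := by
  have hX : 0 ≤ Xop n i j := by unfold Xop; split_ifs <;> positivity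
  have hs : single (spikeIdx n) (spikeIdx n) (3 / 8 * (n : ℝ) ^ α) i j = 0 :=
    single_apply_of_ne _ _ _ _ _ fun h => hij (h.1.symm.trans h.2)
  simp only [Hspike, H0, Zop, Matrix.add_apply, Matrix.smul_apply, smul_eq_mul,
    diagonal_apply_ne _ hij, hs]
  nlinarith [Real.sqrt_nonneg 3]

lemma Hspike_mulVec_ampMul (n : ℕ) (α : ℝ) (f : ℤ → ℝ) :
    Hspike n α *ᵥ ampMul n f = (fun k : Fin (n + 1) => reducedH0 n f k * amp n k) +
      Pi.single (spikeIdx n) (3 / 8 * (n : ℝ) ^ α * ampMul n f (spikeIdx n)) := by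
  ext k
  rw [Hspike, add_mulVec, single_mulVec, Pi.add_apply, Pi.add_apply, H0_mulVec_ampMul]
  rfl

lemma Hspike_mulVec_ampMul_of_eq_zero {n m : ℕ} (hm : n = 4 * m) (α : ℝ) {f : ℤ → ℝ}
    (hf : f m = 0) :
    Hspike n α *ᵥ ampMul n f = fun k : Fin (n + 1) => reducedH0 n f k * amp n k := by
  rw [Hspike_mulVec_ampMul, ampMul, spikeIdx_val hm, hf]
  simp

lemma Hspike_mulVec_ampMul_tilt {n m : ℕ} (hm : n = 4 * m) (α : ℝ) :
    Hspike n α *ᵥ ampMul n (fun j => n - 4 * j) =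
      (-((n : ℝ) / 2 - 1)) • ampMul n (fun j => n - 4 * j) := by
  rw [Hspike_mulVec_ampMul_of_eq_zero hm α (by push_cast [hm]; ring)]
  ext k
  simp [ampMul, reducedH0_tilt, mul_assoc]

lemma Hspike_sub_mulVec_ampMul_abs_tilt {n m : ℕ} (hm : n = 4 * m) (α : ℝ) :
    (Hspike n α - (-((n : ℝ) / 2 - 1)) • 1) *ᵥ ampMul n (fun j => |(n : ℝ) - 4 * j|) =
      Pi.single (spikeIdx n) (-(3 * n / 2) * amp n m) := by
  rw [sub_mulVec, Hspike_mulVec_ampMul_of_eq_zero hm α (by push_cast [hm]; simp),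
    smul_mulVec, one_mulVec]
  ext k
  by_cases hk : k = spikeIdx n
  · subst hk
    rw [Pi.sub_apply, spikeIdx_val hm, reducedH0_abs_tilt_self hm]
    simp [ampMul, spikeIdx_val hm, hm]
  · have hkm : (k : ℕ) ≠ m := fun h => hk (Fin.ext (h.trans (spikeIdx_val hm).symm))
    simp [ampMul, reducedH0_abs_tilt_of_ne hm hkm, hk, mul_assoc]

lemma le_Hspike_mulVec_ampMul {n m : ℕ} (hm : n = 4 * m) (α : ℝ) {ε y : ℝ} (hy : 0 < y)
    (hεy : y ≤ ε * (4 + y)) (hspike : 3 * n / 2 ≤ (3 / 8 * (n : ℝ) ^ α - 1 + ε) * y)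
    (k : Fin (n + 1)) :
    (-((n : ℝ) / 2 - 1) - ε) * ampMul n (fun j => |(n : ℝ) - 4 * j| + y) k ≤
      (Hspike n α *ᵥ ampMul n (fun j => |(n : ℝ) - 4 * j| + y)) k := by
  rw [Hspike_mulVec_ampMul, Pi.add_apply, reducedH0_add_const]
  simp only [ampMul, spikeIdx_val hm, Int.cast_natCast]
  by_cases hk : k = spikeIdx n
  · subst hk
    have h0 : |(n : ℝ) - 4 * m| = 0 := by rw [abs_eq_zero, sub_eq_zero]; exact_mod_cast hm
    rw [Pi.single_eq_same, spikeIdx_val hm, reducedH0_abs_tilt_self hm, h0, zero_add]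
    nlinarith [mul_nonneg (amp_nonneg n m) (sub_nonneg.2 hspike)]
  · have hkm : (k : ℕ) ≠ m := fun h => hk (Fin.ext (h.trans (spikeIdx_val hm).symm))
    rw [Pi.single_eq_of_ne hk, reducedH0_abs_tilt_of_ne hm hkm, add_zero]
    have ha := four_le_abs_tilt hm hkm
    have hε : 0 < ε := by nlinarith
    have key : y ≤ ε * (|(n : ℝ) - 4 * k| + y) := by nlinarith
    nlinarith [amp_nonneg n k]

lemma Hspike_eigenvalues_ge {n m : ℕ} (hm : n = 4 * m) {α : ℝ} (hH : (Hspike n α).IsHermitian)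
    {ε y : ℝ} (hy : 0 < y) (hεy : y ≤ ε * (4 + y))
    (hspike : 3 * n / 2 ≤ (3 / 8 * (n : ℝ) ^ α - 1 + ε) * y) (i : Fin (n + 1)) :
    -((n : ℝ) / 2 - 1) - ε ≤ hH.eigenvalues i :=
  le_eigenvalue_of_le_mulVec_of_offDiag_nonpos (fun _ _ => Hspike_apply_nonpos_of_ne n α)
    (fun k => mul_pos (by positivity) (amp_pos (Nat.lt_succ_iff.1 k.2)))
    (le_Hspike_mulVec_ampMul hm α hy hεy hspike)
    ((WithLp.ofLp_eq_zero 2).ne.2 (hH.eigenvectorBasis.orthonormal.ne_zero i))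
    (hH.mulVec_eigenvectorBasis i)

lemma Hspike_exists_eigenvalues_eq {n m : ℕ} (hm : n = 4 * m) (hn : 0 < n) {α : ℝ}
    (hH : (Hspike n α).IsHermitian) : ∃ j, hH.eigenvalues j = -((n : ℝ) / 2 - 1) := by
  refine hH.exists_eigenvalues_eq (fun h => ?_) (Hspike_mulVec_ampMul_tilt hm α)
  have := congrFun h 0
  simp only [ampMul, Fin.val_zero, Nat.cast_zero, Int.cast_zero, mul_zero, sub_zero,
    Pi.zero_apply] at this
  exact (mul_pos (by exact_mod_cast hn) (amp_pos (Nat.zero_le n))).ne' this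

lemma Hspike_exists_eigenvalues_lt {n m : ℕ} (hm : n = 4 * m) (hn : 0 < n) {α : ℝ}
    (hH : (Hspike n α).IsHermitian) : ∃ i, hH.eigenvalues i < -((n : ℝ) / 2 - 1) := by
  refine hH.exists_eigenvalues_lt (x := ampMul n fun j => |(n : ℝ) - 4 * j|) ?_ ?_ <;>
    rw [RCLike.ofReal_real_eq_id, id, Hspike_sub_mulVec_ampMul_abs_tilt hm α]
  · simp [ampMul, spikeIdx_val hm, hm]
  · have : 0 < 3 * (n : ℝ) / 2 * amp n m := mul_pos (by positivity) (amp_pos (by omega))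
    simpa using this.ne'

lemma collatz_weight_bounds {N a : ℝ} (hN : 0 < N) (ha : 0 < a) :
    3 * N / (3 * N + a) * (4 + 12 * N / a) = 12 * N / a ∧
      3 * N / 2 ≤ (a / 8 + 3 * N / (3 * N + a)) * (12 * N / a) := by
  have hD : 0 < 3 * N + a := by linarith
  constructor
  · field_simp
    ring
  · rw [div_add_div _ _ (by norm_num) hD.ne', div_mul_div_comm, le_div_iff₀ (by positivity)]
    nlinarith [mul_pos hN hN, mul_pos hN ha]

/-- Upper bound on the spectral gap of the width-1 spike Hamiltonian at s*
when α > 1: gap(n) ≤ 3n/(3n + 3n^α - 8), so gap(n) = O(n^(1-α)) → 0. -/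
theorem spike_gap_upper_bound (n : ℕ) (hn : 0 < n) (h4 : 4 ∣ n)
    (α : ℝ) (hbig : 8 < 3 * (n : ℝ)^α)
    (hH : (Hspike n α).IsHermitian) :
    sortedEigenvalues hH ⟨1, by omega⟩ - sortedEigenvalues hH ⟨0, by omega⟩
      ≤ 3 * (n : ℝ) / (3 * (n : ℝ) + 3 * (n : ℝ)^α - 8) := by
  obtain ⟨m, hm⟩ := h4
  obtain ⟨j, hj⟩ := Hspike_exists_eigenvalues_eq hm hn hH
  obtain ⟨i, hi⟩ := Hspike_exists_eigenvalues_lt hm hn hH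
  have ha := sub_pos.2 hbig
  obtain ⟨hεy, hspike⟩ := collatz_weight_bounds (N := n) (by exact_mod_cast hn) ha
  rw [show 3 * (n : ℝ) + (3 * (n : ℝ) ^ α - 8) = 3 * n + 3 * (n : ℝ) ^ α - 8 by ring]
    at hεy hspike
  rw [show (3 * (n : ℝ) ^ α - 8) / 8 = 3 / 8 * (n : ℝ) ^ α - 1 by ring] at hspike
  have h0 := Hspike_eigenvalues_ge hm hH (by positivity) hεy.ge hspike
    (Tuple.sort hH.eigenvalues ⟨0, by omega⟩)
  have h1 := Tuple.sort_apply_one_le (by omega) hH.eigenvalues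
    (fun h : i = j => hi.ne (h ▸ hj)) hi.le hj.le
  simp only [sortedEigenvalues, Function.comp_apply] at h1 ⊢
  linarith
end

section
/- With |psi_1> the first excited state of the spikeless H_0 = -(sqrt(3)/2)X - (1/2)Z (having <n/4|psi_1> = 0 when n is divisible by 4), |psi_1> is also an eigenvector of the spike Hamiltonian H = H_0 + (3/8) n^alpha |n/4><n/4| with the same eigenvalue -(n/2 - 1). -/
open Matrix

/-! The spike is the rank-one matrix `(3/8) n^α |n/4⟩⟨n/4|`, which annihilates `ψ₁` because the
factor `n - 4k` of `ψ₁` vanishes at `k = n/4`. So it suffices that `H₀ ψ₁ = -(n/2 - 1) ψ₁`.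
Up to normalisation `ψ₁(k) = A(k) (n - 4k)` with the binomial amplitude
`A(k) = √C(n,k) (1/2)^k (√3/2)^(n-k)`. `X` only couples `k` to `k ± 1`, and the identity
`C(n,k+1) (k+1) = C(n,k) (n-k)` turns `√((k+1)(n-k)) A(k+1)` and `√(k(n+1-k)) A(k-1)` into
multiples of `A(k)`, so each row of the eigenvalue equation becomes a polynomial identity
in `n` and `k`. -/

theorem Nat.cast_choose_succ_mul {R : Type*} [CommRing R] {n m : ℕ} (h : m ≤ n) :
    (n.choose (m + 1) : R) * (m + 1) = n.choose m * (n - m) := by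
  have := congrArg (Nat.cast : ℕ → R) (Nat.choose_succ_right_eq n m)
  push_cast [Nat.cast_sub h] at this
  exact this

theorem Real.sqrt_mul_sqrt_choose_succ {n m : ℕ} (h : m ≤ n) :
    √((m + 1) * (n - m)) * √(n.choose (m + 1)) = (n - m) * √(n.choose m) := by
  have hnm : (0 : ℝ) ≤ n - m := sub_nonneg.2 (by exact_mod_cast h)
  rw [← Real.sqrt_mul' _ (Nat.cast_nonneg _),
    show ((m : ℝ) + 1) * (n - m) * n.choose (m + 1) = (n - m) ^ 2 * n.choose m by
      linear_combination ((n : ℝ) - m) * Nat.cast_choose_succ_mul (R := ℝ) h,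
    Real.sqrt_mul (sq_nonneg _), Real.sqrt_sq hnm]

theorem Real.sqrt_mul_sqrt_choose {n m : ℕ} (h : m ≤ n) :
    √((m + 1) * (n - m)) * √(n.choose m) = (m + 1) * √(n.choose (m + 1)) := by
  rw [← Real.sqrt_mul' _ (Nat.cast_nonneg _),
    show ((m : ℝ) + 1) * (n - m) * n.choose m = (m + 1) ^ 2 * n.choose (m + 1) by
      linear_combination (-((m : ℝ) + 1)) * Nat.cast_choose_succ_mul (R := ℝ) h,
    Real.sqrt_mul (sq_nonneg _), Real.sqrt_sq (by positivity)]

noncomputable def binomialAmplitude (p q : ℝ) (n k : ℕ) : ℝ :=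
  √(n.choose k) * p ^ k * q ^ (n - k)

theorem binomialAmplitude_mul (p q : ℝ) (n m : ℕ) :
    binomialAmplitude p q n m * p = √(n.choose m) * p ^ (m + 1) * q ^ (n - m) := by
  rw [binomialAmplitude, pow_succ]
  ring

theorem binomialAmplitude_succ_mul (p q : ℝ) {n m : ℕ} (h : m < n) :
    binomialAmplitude p q n (m + 1) * q = √(n.choose (m + 1)) * p ^ (m + 1) * q ^ (n - m) := by
  rw [binomialAmplitude, mul_assoc _ (q ^ _), ← pow_succ, show n - (m + 1) + 1 = n - m by omega]

theorem sqrt_mul_binomialAmplitude_succ (p q : ℝ) {n m : ℕ} (h : m ≤ n) :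
    q * (√((m + 1) * (n - m)) * binomialAmplitude p q n (m + 1)) =
      p * ((n - m) * binomialAmplitude p q n m) := by
  rcases h.lt_or_eq with h | rfl
  · linear_combination p ^ (m + 1) * q ^ (n - m) * Real.sqrt_mul_sqrt_choose_succ h.le
      + √((m + 1) * (n - m)) * binomialAmplitude_succ_mul p q h
      - (n - m) * binomialAmplitude_mul p q n m
  · simp

theorem sqrt_mul_binomialAmplitude_pred (p q : ℝ) {n k : ℕ} (h : k ≤ n) :
    p * (√(k * (n + 1 - k)) * binomialAmplitude p q n (k - 1)) =
      q * (k * binomialAmplitude p q n k) := by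
  obtain _ | m := k
  · simp
  have hm : m < n := by omega
  push_cast
  rw [add_sub_add_right_eq_sub]
  linear_combination p ^ (m + 1) * q ^ (n - m) * Real.sqrt_mul_sqrt_choose hm.le
    - (m + 1) * binomialAmplitude_succ_mul p q hm
    + √((m + 1) * (n - m)) * binomialAmplitude_mul p q n m

theorem Xop_mulVec_apply (n : ℕ) (f : ℕ → ℝ) (k : Fin (n + 1)) :
    (Xop n *ᵥ fun j => f j) k =
      (√((k.val + 1) * (n - k.val)) * f (k + 1) + √(k.val * (n + 1 - k.val)) * f (k - 1)) / 2 := by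
  let up (j : ℕ) : ℝ := if k.val + 1 = j then √(j * (n + 1 - j)) * f j / 2 else 0
  let down (j : ℕ) : ℝ := if j + 1 = k.val then √(k.val * (n + 1 - k.val)) * f j / 2 else 0
  have hsplit : (Xop n *ᵥ fun j => f j) k = ∑ j ∈ Finset.range (n + 1), (up j + down j) := by
    rw [← Fin.sum_univ_eq_sum_range (fun j => up j + down j), mulVec, dotProduct]
    refine Finset.sum_congr rfl fun j _ => ?_
    simp only [Xop, up, down]
    split_ifs <;> first | omega | ring
  have hup : ∑ j ∈ Finset.range (n + 1), up j = √((k.val + 1) * (n - k.val)) * f (k + 1) / 2 := by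
    rw [Finset.sum_ite_eq]
    split_ifs with hk
    · push_cast
      rw [add_sub_add_right_eq_sub]
    · have : k.val = n := by simp at hk; omega
      simp [this]
  have hdown : ∑ j ∈ Finset.range (n + 1), down j = √(k.val * (n + 1 - k.val)) * f (k - 1) / 2 := by
    obtain ⟨_ | m, hk⟩ := k
    · simp [down]
    · simp only [down, add_left_inj, Finset.sum_ite_eq', Finset.mem_range]
      rw [if_pos (by omega), Nat.add_sub_cancel]
  rw [hsplit, Finset.sum_add_distrib, hup, hdown]
  ring

theorem H0_mulVec_apply (n : ℕ) (v : Fin (n + 1) → ℝ) (k : Fin (n + 1)) :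
    (H0 n *ᵥ v) k = -(√3 / 2) * (Xop n *ᵥ v) k - (n / 2 - k.val) * v k / 2 := by
  simp only [H0, Zop, add_mulVec, smul_mulVec, Pi.add_apply, Pi.smul_apply, mulVec_diagonal,
    smul_eq_mul]
  ring

theorem psi0_apply (n : ℕ) (k : Fin (n + 1)) :
    psi0 n k = binomialAmplitude (1 / 2) (√3 / 2) n k :=
  rfl

theorem H0_mulVec_psi0_mul_sub (n : ℕ) :
    (H0 n *ᵥ fun k => psi0 n k * (n - 4 * k.val)) =
      (-((n : ℝ) / 2 - 1)) • fun k => psi0 n k * (n - 4 * k.val) := by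
  funext k
  have hX := Xop_mulVec_apply n (fun j => binomialAmplitude (1 / 2) (√3 / 2) n j * (n - 4 * j)) k
  have hup := sqrt_mul_binomialAmplitude_succ (1 / 2) (√3 / 2) k.is_le
  have hdown := sqrt_mul_binomialAmplitude_pred (1 / 2) (√3 / 2) k.is_le
  -- at `k = 0` the truncated `k - 1` is harmless, its coefficient `√(k (n + 1 - k))` vanishes
  have hcast : √(k.val * (n + 1 - k.val)) * ((k.val - 1 : ℕ) : ℝ) =
      √(k.val * (n + 1 - k.val)) * (k.val - 1) := by
    obtain ⟨_ | m, _⟩ := k <;> simp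
  have h3 : √3 * √3 = 3 := Real.mul_self_sqrt (by norm_num)
  simp only [psi0_apply, H0_mulVec_apply, hX, Pi.smul_apply, smul_eq_mul]
  push_cast
  set A := binomialAmplitude (1 / 2) (√3 / 2) n
  linear_combination (-(1 / 2) * ((n : ℝ) - 4 * k.val - 4)) * hup
    + (-(√3 / 2) * ((n : ℝ) - 4 * k.val + 4)) * hdown
    + (√3 * A (k.val - 1)) * hcast
    + (-(1 / 4) * k.val * A k.val * ((n : ℝ) - 4 * k.val + 4)) * h3

theorem psi1_eq_smul (n : ℕ) :
    psi1 n = (√(3 * n))⁻¹ • fun k => psi0 n k * (n - 4 * k.val) := by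
  funext k
  simp only [psi1, psi0, Pi.smul_apply, smul_eq_mul]
  rw [Real.sqrt_div' _ (by positivity)]
  ring

theorem H0_mulVec_psi1 (n : ℕ) : H0 n *ᵥ psi1 n = (-((n : ℝ) / 2 - 1)) • psi1 n := by
  rw [psi1_eq_smul, mulVec_smul, H0_mulVec_psi0_mul_sub, smul_comm]

theorem psi1_spikeIdx {n : ℕ} (h4 : 4 ∣ n) : psi1 n (spikeIdx n) = 0 := by
  obtain ⟨m, rfl⟩ := h4
  simp [psi1, spikeIdx]

theorem psi1_eigenvector_of_spike_general (n : ℕ) (h4 : 4 ∣ n) (α : ℝ) :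
    (Hspike n α).mulVec (psi1 n) = (-((n : ℝ)/2 - 1)) • psi1 n := by
  rw [Hspike, add_mulVec, H0_mulVec_psi1, single_mulVec_eq, psi1_spikeIdx h4, mul_zero,
    zero_smul, add_zero]

/-- Since ⟨n/4|ψ₁⟩ = 0 when 4 ∣ n, the first excited state of the spikeless
Hamiltonian remains an eigenvector of the spike Hamiltonian with the same
eigenvalue -(n/2 - 1). -/
theorem psi1_eigenvector_of_spike (n : ℕ) (hn : 0 < n) (h4 : 4 ∣ n) (α : ℝ) :
    (Hspike n α).mulVec (psi1 n) = (-((n : ℝ)/2 - 1)) • psi1 n :=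
  psi1_eigenvector_of_spike_general n h4 α
end
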